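/- Let σ be a permutation of length k ≥ 3 with σ₁ > σ_k. Then σ straddles the direct sum σ ⊕ σ, and consequently the interval [σ, σ⊕σ] in the consecutive pattern poset is disconnected. -/

import Mathlib

/-!
An occurrence of `σ` in `σ ⊕ σ` that meets both blocks starts in the first block and ends in
the second, so its first entry is smaller than its last; when `σ₁ > σ_k` this is impossible,
and `σ` occurs only as the prefix and the suffix of `σ ⊕ σ`.

If `σ` straddles `τ`, then for `σ < ρ ≤ ρ' < τ` the pattern `σ` is a prefix of `ρ` iff it is a
prefix of `ρ'`: composing the occurrences places a copy of `σ` inside a proper window of `τ`,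
where it can only sit at position `0`. So "having `σ` as a prefix" is constant on components
of the Hasse diagram of `(σ, τ)`, yet the prefix of `τ` of length `|σ| + 1` has this property
and the suffix of that length does not.
-/

open scoped Classical

noncomputable section

/-- A permutation of length `n`, written in one-line notation as `τ 0, τ 1, …, τ (n-1)`. -/
abbrev Perm' (n : ℕ) := Equiv.Perm (Fin n)

/-- `σ` occurs in `τ` as a consecutive pattern at (0-indexed) starting position `i`:
the window `τ i, …, τ (i+m-1)` of adjacent entries is in the same relative order as `σ`. -/
def OccursAt {m n : ℕ} (σ : Perm' m) (τ : Perm' n) (i : ℕ) : Prop :=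
  ∃ h : i + m ≤ n, ∀ a b : Fin m,
    σ a < σ b ↔
      τ ⟨i + a, by have := a.isLt; omega⟩ < τ ⟨i + b, by have := b.isLt; omega⟩

/-- Consecutive pattern containment `σ ≤ τ`. -/
def PattLE {m n : ℕ} (σ : Perm' m) (τ : Perm' n) : Prop :=
  ∃ i, OccursAt σ τ i

/-- Permutations of arbitrary length: the carrier of the consecutive pattern poset. -/
abbrev PermS : Type := Σ n : ℕ, Perm' n

/-- The order of the consecutive pattern poset. -/
def pLE (p q : PermS) : Prop := PattLE p.2 q.2

/-- The strict order of the consecutive pattern poset. -/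
def pLT (p q : PermS) : Prop := pLE p q ∧ p ≠ q

/-- The covering relation of the consecutive pattern poset. -/
def pCovBy (p q : PermS) : Prop :=
  pLT p q ∧ ∀ r : PermS, pLT p r → pLT r q → False

/-- The open interval `(p,q)` in the consecutive pattern poset. -/
def openInterval (p q : PermS) : Set PermS := {r | pLT p r ∧ pLT r q}

/-- The Hasse diagram of the open interval `(p,q)`: vertices are the permutations strictly
between `p` and `q`, edges are the covering relations of the consecutive pattern poset. -/
def hasse (p q : PermS) : SimpleGraph (openInterval p q) :=
  SimpleGraph.fromRel fun a b => pCovBy a.1 b.1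

/-- The interval `[p,q]` is disconnected if the Hasse diagram of `(p,q)` is not connected. -/
def IntervalDisconnected (p q : PermS) : Prop := ¬ (hasse p q).Connected

/-- `window τ i m` is the reduction of the window of `τ` of length `m` starting at
(0-indexed) position `i`, i.e. the pattern `τ[i+1, i+m]` in 1-indexed notation. -/
def window {n : ℕ} (τ : Perm' n) (i m : ℕ) : Perm' m :=
  if h : i + m ≤ n then
    (Tuple.sort fun a : Fin m => τ ⟨i + a, by have := a.isLt; omega⟩)⁻¹
  else 1

/-- `τ` is monotone, i.e. equal to `12…n` or `n…21`. -/
def IsMonotone {n : ℕ} (τ : Perm' n) : Prop :=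
  (∀ a b : Fin n, a ≤ b → τ a ≤ τ b) ∨ (∀ a b : Fin n, a ≤ b → τ b ≤ τ a)

/-- `τ` has a bifix (a common proper prefix and proper suffix) of length `k`. -/
def HasBifixLen {n : ℕ} (τ : Perm' n) (k : ℕ) : Prop :=
  0 < k ∧ k < n ∧ window τ 0 k = window τ (n - k) k

/-- The length `|x(τ)|` of the exterior of `τ`, the longest bifix of `τ`. -/
def extLen {n : ℕ} (τ : Perm' n) : ℕ := Nat.findGreatest (HasBifixLen τ) n

/-- The exterior `x(τ)` of `τ`: its longest bifix. -/
def extPerm {n : ℕ} (τ : Perm' n) : Perm' (extLen τ) := window τ 0 (extLen τ)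

/-- The interior `i(τ) = τ[2,n-1]` of `τ`. -/
def intPerm {n : ℕ} (τ : Perm' n) : Perm' (n - 2) := window τ 1 (n - 2)

/-- `p` straddles `q`: `p < q`, `p` is both a prefix and a suffix of `q`,
and `p` has no other occurrence in `q`. -/
def Straddles (p q : PermS) : Prop :=
  pLT p q ∧ OccursAt p.2 q.2 0 ∧ OccursAt p.2 q.2 (q.1 - p.1) ∧
    ∀ i, OccursAt p.2 q.2 i → i = 0 ∨ i = q.1 - p.1

/-- The interval `[p,q]` contains a non-trivial disconnected subinterval, i.e. a
subinterval `[a,b]` of rank at least 3 which is disconnected. -/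
def HasNontrivDisconSub (p q : PermS) : Prop :=
  ∃ a b : PermS, pLE p a ∧ pLE a b ∧ pLE b q ∧ a.1 + 3 ≤ b.1 ∧ IntervalDisconnected a b

/-- The finite set of all permutations of length at most `N`. -/
def permsUpTo (N : ℕ) : Finset PermS :=
  (Finset.range (N + 1)).sigma fun n => (Finset.univ : Finset (Perm' n))

/-- The closed interval `[p,q]` of the consecutive pattern poset, as a finite set. -/
def intervalF (p q : PermS) : Finset PermS :=
  (permsUpTo q.1).filter fun r => pLE p r ∧ pLE r q

/-- The number of elements of the interval `[σ,τ]` of rank `r`, i.e. of length `|σ| + r`. -/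
def rankCard {m n : ℕ} (σ : Perm' m) (τ : Perm' n) (r : ℕ) : ℕ :=
  ((permsUpTo n).filter fun p => pLE ⟨m, σ⟩ p ∧ pLE p ⟨n, τ⟩ ∧ p.1 = m + r).card

/-- The direct sum `σ ⊕ π` of two permutations. -/
def dsum {m k : ℕ} (σ : Perm' m) (π : Perm' k) : Perm' (m + k) :=
  finSumFinEquiv.permCongr (σ.sumCongr π)

namespace OccursAt

variable {m p n : ℕ} {σ : Perm' m} {π : Perm' p} {τ : Perm' n} {i j : ℕ}

theorem lt_iff_lt (h : OccursAt σ τ i) (a b : Fin m) {x y : ℕ} (hx : x = i + a) (hy : y = i + b)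
    (hxn : x < n) (hyn : y < n) : σ a < σ b ↔ τ ⟨x, hxn⟩ < τ ⟨y, hyn⟩ := by
  subst hx hy
  exact h.2 a b

theorem trans (h₁ : OccursAt σ π j) (h₂ : OccursAt π τ i) : OccursAt σ τ (i + j) := by
  have := h₁.1
  have := h₂.1
  refine ⟨by omega, fun a b => (h₁.2 a b).trans ?_⟩
  exact h₂.lt_iff_lt ⟨j + a, by omega⟩ ⟨j + b, by omega⟩ (by simp; omega) (by simp; omega) _ _

theorem of_add (hπ : OccursAt π τ i) (hσ : OccursAt σ τ (i + j)) (hj : j + m ≤ p) :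
    OccursAt σ π j := by
  have := hσ.1
  refine ⟨hj, fun a b => (hσ.2 a b).trans ?_⟩
  exact (hπ.lt_iff_lt ⟨j + a, by omega⟩ ⟨j + b, by omega⟩ (by simp; omega) (by simp; omega)
    _ _).symm

theorem eq_of_zero {σ π : Perm' m} (h : OccursAt σ π 0) : σ = π := by
  have hmono : StrictMono (π ∘ σ.symm) := fun x y hxy => by
    simpa using (h.lt_iff_lt (σ.symm x) (σ.symm y) (zero_add _).symm (zero_add _).symm
      (σ.symm x).isLt (σ.symm y).isLt).1 (by simpa using hxy)
  ext a
  simpa using congrArg Fin.val (hmono.apply_eq (x := σ a)).symm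

end OccursAt

theorem inv_sort_lt_inv_sort_iff {m : ℕ} {α : Type*} [LinearOrder α] {f : Fin m → α}
    (hf : Function.Injective f) (a b : Fin m) :
    (Tuple.sort f)⁻¹ a < (Tuple.sort f)⁻¹ b ↔ f a < f b := by
  have hmono : StrictMono (f ∘ Tuple.sort f) :=
    (Tuple.monotone_sort f).strictMono_of_injective (hf.comp (Tuple.sort f).injective)
  rw [← hmono.lt_iff_lt]
  simp

theorem occursAt_window {n i m : ℕ} (τ : Perm' n) (h : i + m ≤ n) :
    OccursAt (window τ i m) τ i := by
  refine ⟨h, fun a b => ?_⟩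
  rw [window, dif_pos h]
  refine inv_sort_lt_inv_sort_iff (fun x y hxy => Fin.ext ?_) a b
  have := congrArg Fin.val (τ.injective hxy)
  simp only at this
  omega

theorem pLT_of_occursAt {m n i : ℕ} {σ : Perm' m} {τ : Perm' n} (h : OccursAt σ τ i)
    (hmn : m < n) : pLT ⟨m, σ⟩ ⟨n, τ⟩ :=
  ⟨⟨i, h⟩, fun he => hmn.ne (congrArg Sigma.fst he)⟩

theorem pLT.fst_lt {a b : PermS} (h : pLT a b) : a.1 < b.1 := by
  obtain ⟨⟨i, hi⟩, hne⟩ := h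
  have := hi.1
  refine lt_of_le_of_ne (by omega) fun hlen => hne ?_
  obtain ⟨m, σ⟩ := a
  obtain ⟨n, τ⟩ := b
  obtain rfl : m = n := hlen
  obtain rfl : i = 0 := by simp only at this; omega
  obtain rfl : σ = τ := hi.eq_of_zero
  rfl

theorem SimpleGraph.Reachable.iff_of_adj {V : Type*} {G : SimpleGraph V} {P : V → Prop}
    (hP : ∀ x y, G.Adj x y → (P x ↔ P y)) {u v : V} (h : G.Reachable u v) : P u ↔ P v := by
  obtain ⟨w⟩ := h
  induction w with
  | nil => rfl
  | cons hadj _ ih => exact (hP _ _ hadj).trans ih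

theorem occursAt_zero_iff_of_pLT {m n : ℕ} {σ : Perm' m} {τ : Perm' n}
    (hτ : ∀ i, OccursAt σ τ i → i = 0 ∨ i = n - m)
    {r s : PermS} (hr : pLT ⟨m, σ⟩ r) (hrs : pLE r s) (hs : pLT s ⟨n, τ⟩) :
    OccursAt σ r.2 0 ↔ OccursAt σ s.2 0 := by
  obtain ⟨t, ht⟩ := hrs
  obtain ⟨i, hi⟩ := hs.1
  obtain ⟨j, hj⟩ := hr.1
  have : m < r.1 := hr.fst_lt
  have : s.1 < n := hs.fst_lt
  have := ht.1
  have : i + s.1 ≤ n := hi.1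
  have : j + m ≤ r.1 := hj.1
  have eq_zero : ∀ l, OccursAt σ τ l → l + m < n → l = 0 := fun l hl hln => by
    rcases hτ l hl with h | h <;> omega
  constructor
  · intro h0
    have := eq_zero _ (h0.trans (ht.trans hi)) (by omega)
    obtain rfl : t = 0 := by omega
    exact h0.trans ht
  · intro h0
    have := eq_zero _ (h0.trans hi) (by omega)
    have := eq_zero _ (hj.trans (ht.trans hi)) (by omega)
    obtain rfl : j = 0 := by omega
    exact hj

theorem Straddles.intervalDisconnected {p q : PermS} (h : Straddles p q) (hlen : p.1 + 2 ≤ q.1) :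
    IntervalDisconnected p q := by
  obtain ⟨m, σ⟩ := p
  obtain ⟨n, τ⟩ := q
  obtain ⟨-, hpre, hsuf, honly⟩ := h
  simp only at hlen honly hsuf
  have hu := occursAt_window τ (i := 0) (m := m + 1) (by omega)
  have hv := occursAt_window τ (i := n - m - 1) (m := m + 1) (by omega)
  have hσu : OccursAt σ (window τ 0 (m + 1)) 0 := hu.of_add hpre (by omega)
  have hσv : OccursAt σ (window τ (n - m - 1) (m + 1)) 1 :=
    hv.of_add (by rw [show n - m - 1 + 1 = n - m by omega]; exact hsuf) (by omega)
  have hnσv : ¬ OccursAt σ (window τ (n - m - 1) (m + 1)) 0 := fun h0 => by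
    rcases honly _ (h0.trans hv) with h | h <;> omega
  intro hconn
  let x : openInterval ⟨m, σ⟩ ⟨n, τ⟩ :=
    ⟨⟨m + 1, _⟩, pLT_of_occursAt hσu (by omega), pLT_of_occursAt hu (by omega)⟩
  let y : openInterval ⟨m, σ⟩ ⟨n, τ⟩ :=
    ⟨⟨m + 1, _⟩, pLT_of_occursAt hσv (by omega), pLT_of_occursAt hv (by omega)⟩
  refine hnσv (((hconn.preconnected x y).iff_of_adj (P := fun z => OccursAt σ z.1.2 0) ?_).1 hσu)
  rintro ⟨r, hr⟩ ⟨s, hs⟩ hrs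
  obtain ⟨-, hcov | hcov⟩ := SimpleGraph.fromRel_adj _ _ _ |>.1 hrs
  · exact occursAt_zero_iff_of_pLT honly hr.1 hcov.1.1 hs.2
  · exact (occursAt_zero_iff_of_pLT honly hs.1 hcov.1.1 hr.2).symm

section DirectSum

variable {m k : ℕ} (σ : Perm' m) (π : Perm' k)

theorem dsum_castAdd (a : Fin m) : dsum σ π (Fin.castAdd k a) = Fin.castAdd k (σ a) := by
  simp [dsum]

theorem dsum_natAdd (a : Fin k) : dsum σ π (Fin.natAdd m a) = Fin.natAdd m (π a) := by
  simp [dsum]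

theorem dsum_val_of_lt {x : ℕ} (hx : x < m + k) (h : x < m) :
    (dsum σ π ⟨x, hx⟩ : ℕ) = σ ⟨x, h⟩ := by
  have : (⟨x, hx⟩ : Fin (m + k)) = Fin.castAdd k ⟨x, h⟩ := rfl
  rw [this, dsum_castAdd]
  rfl

theorem dsum_val_of_le {x : ℕ} (hx : x < m + k) (h : m ≤ x) :
    (dsum σ π ⟨x, hx⟩ : ℕ) = m + π ⟨x - m, by omega⟩ := by
  have : (⟨x, hx⟩ : Fin (m + k)) = Fin.natAdd m ⟨x - m, by omega⟩ := Fin.ext (by simp; omega)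
  rw [this, dsum_natAdd]
  rfl

theorem occursAt_dsum_left : OccursAt σ (dsum σ π) 0 := by
  refine ⟨by omega, fun a b => ?_⟩
  simp only [Fin.lt_def, zero_add, dsum_val_of_lt σ π _ a.isLt, dsum_val_of_lt σ π _ b.isLt]

theorem occursAt_dsum_right : OccursAt π (dsum σ π) m := by
  refine ⟨le_rfl, fun a b => ?_⟩
  simp only [Fin.lt_def, dsum_val_of_le σ π _ (show m ≤ m + (a : ℕ) by omega),
    dsum_val_of_le σ π _ (show m ≤ m + (b : ℕ) by omega), Nat.add_sub_cancel_left,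
    Nat.add_lt_add_iff_left]

variable {σ π}

theorem add_le_or_le_of_occursAt_dsum {l i : ℕ} {ρ : Perm' l} (hl : 0 < l)
    (hρ : ρ ⟨l - 1, by omega⟩ < ρ ⟨0, hl⟩) (h : OccursAt ρ (dsum σ π) i) : i + l ≤ m ∨ m ≤ i := by
  by_contra! hcross
  have := h.1
  have hlt : dsum σ π ⟨i, by omega⟩ < dsum σ π ⟨i + (l - 1), by omega⟩ := by
    rw [Fin.lt_def, dsum_val_of_lt σ π _ hcross.2, dsum_val_of_le σ π _ (by omega)]
    omega
  exact hρ.not_gt ((h.lt_iff_lt _ _ rfl rfl _ _).2 hlt)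

end DirectSum

theorem straddles_dsum_self {k : ℕ} (σ : Perm' k) (hk : 0 < k)
    (h : σ ⟨k - 1, by omega⟩ < σ ⟨0, hk⟩) : Straddles ⟨k, σ⟩ ⟨k + k, dsum σ σ⟩ := by
  refine ⟨pLT_of_occursAt (occursAt_dsum_left σ σ) (by omega), occursAt_dsum_left σ σ, ?_,
    fun i hi => ?_⟩
  · simpa using occursAt_dsum_right σ σ
  · have : i + k ≤ k + k := hi.1
    show i = 0 ∨ i = k + k - k
    rcases add_le_or_le_of_occursAt_dsum hk h hi with h' | h' <;> omega

/-- from the proof of Theorem 3.5: if `σ` has length `k ≥ 3` and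
`σ₁ > σ_k`, then `σ` straddles `σ ⊕ σ`, and hence `[σ, σ ⊕ σ]` is disconnected. -/
theorem stmt18 {k : ℕ} (hk : 3 ≤ k) (σ : Perm' k)
    (h : σ ⟨k - 1, by omega⟩ < σ ⟨0, by omega⟩) :
    Straddles ⟨k, σ⟩ ⟨k + k, dsum σ σ⟩ ∧
      IntervalDisconnected ⟨k, σ⟩ ⟨k + k, dsum σ σ⟩ := by
  have hs := straddles_dsum_self σ (by omega) h
  exact ⟨hs, hs.intervalDisconnected (show k + 2 ≤ k + k by omega)⟩

end
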